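/- For all ℓ ≥ ρ(F₂) + 2 = 5, the graph F₂ is ℓ-mixing: χ(F₂) = 3 and from any ℓ-coloring one can reach, recoloring each vertex at most twice, a 3-coloring with color classes {v₁,v₃,v₅}, {v₂,v₄,v₆}, {s₁,s₂,s₃}; hence R_ℓ(F₂) is connected with diameter at most 6·|V(F₂)|. -/

import Mathlib

open SimpleGraph

/-- A proper coloring of `G` with colors in `Fin ℓ`. -/
def IsProperColoring {V : Type*} (G : SimpleGraph V) (ℓ : ℕ) (f : V → Fin ℓ) : Prop :=
  ∀ ⦃a b : V⦄, G.Adj a b → f a ≠ f b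

/-- A walk in the reconfiguration graph `R_ℓ(G)`: a sequence `c 0, c 1, …, c m` of proper
`ℓ`-colorings of `G` in which consecutive colorings differ on at most one vertex. -/
def IsRecolorSeq {V : Type*} (G : SimpleGraph V) (ℓ m : ℕ) (c : ℕ → V → Fin ℓ) : Prop :=
  (∀ i ≤ m, IsProperColoring G ℓ (c i)) ∧
    ∀ i < m, ∀ a b : V, a ≠ b → c i a ≠ c (i + 1) a → c i b = c (i + 1) b

/-- The number of times the vertex `a` is recolored along the sequence `c 0, …, c m`. -/
def recolorCount {V : Type*} {ℓ : ℕ} (m : ℕ) (c : ℕ → V → Fin ℓ) (a : V) : ℕ :=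
  ((Finset.range m).filter fun i => c i a ≠ c (i + 1) a).card

/-- The cycle `Cₙ` on `Fin n` (for `n ≥ 3`). -/
def cyc (n : ℕ) [NeZero n] : SimpleGraph (Fin n) := SimpleGraph.fromRel fun a b => a + 1 = b

/-- The graph `P₂ + P₃`, the disjoint union of an edge and a path on three vertices. -/
def p2p3 : SimpleGraph (Fin 5) := SimpleGraph.fromRel fun a b =>
  (a = 0 ∧ b = 1) ∨ (a = 2 ∧ b = 3) ∨ (a = 3 ∧ b = 4)

/-- The edges of the graph `F₂`: the 6-cycle `v₁…v₆` is `0,…,5`, and `s₁, s₂, s₃` are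
`6, 7, 8`, where `s₁` is adjacent to `v₆,v₁,v₂`, `s₂` to `v₂,v₃,v₄`, `s₃` to `v₄,v₅,v₆`. -/
def f2edges : List (Fin 9 × Fin 9) :=
  [(0, 1), (1, 2), (2, 3), (3, 4), (4, 5), (5, 0),
   (6, 5), (6, 0), (6, 1), (7, 1), (7, 2), (7, 3), (8, 3), (8, 4), (8, 5)]

/-- The graph `F₂`. -/
def F2 : SimpleGraph (Fin 9) := SimpleGraph.fromRel fun a b => (a, b) ∈ f2edges

/-- The target partition of `V(F₂)` into the color classes `{v₁,v₃,v₅}`, `{v₂,v₄,v₆}`,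
`{s₁,s₂,s₃}`. -/
def f2class : Fin 9 → Fin 3 := fun i =>
  if 6 ≤ i.val then 2 else if i.val % 2 = 0 then 0 else 1

/-!
The color classes of a proper coloring are independent, so a class can be recolored one vertex at
a time provided each new color is absent from the neighborhood of its vertex. For `F₂` the classes
of `f2class` are `{v₁,v₃,v₅}`, `{v₂,v₄,v₆}` and `{s₁,s₂,s₃}`. Starting from a proper coloring `φ`
with `ℓ ≥ 5` colors, pick `x` unused on `v₂,v₄,v₆`; move each `sᵢ` to a color avoiding `x` and its
three neighbors; paint `v₁,v₃,v₅` with `x`; paint `v₂,v₄,v₆` with a color `y` avoiding `x` and the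
three colors now on the `sᵢ`; finally paint the `sᵢ` with `z ∉ {x, y}`. Each `sᵢ` is recolored
twice and every other vertex once.

Two colorings that are constant on the classes are joined by renaming through spare colors: the
`sᵢ` go to a color `t` outside both colorings' colors of the cycle classes, then the classes are
recolored in the order `{v₁,v₃,v₅}` (to a color `a` avoiding `t` and both colors of
`{v₂,v₄,v₆}`), `{v₂,v₄,v₆}`, `{v₁,v₃,v₅}`, `{s₁,s₂,s₃}`. Reversing one walk gives walks of length
`12 + 15 + 12 ≤ 54` between any two colorings.
-/

open Finset Function

lemma exists_notMem_of_card_lt {ℓ : ℕ} {s : Finset (Fin ℓ)} (hs : #s < ℓ) : ∃ x, x ∉ s := by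
  obtain ⟨x, -, hx⟩ := exists_mem_notMem_of_card_lt_card (s := s) (t := univ) (by simpa using hs)
  exact ⟨x, hx⟩

lemma injective_vecCons_three {ℓ : ℕ} {a b c : Fin ℓ} (hab : a ≠ b) (hac : a ≠ c) (hbc : b ≠ c) :
    Injective ![a, b, c] := by
  intro i j hij
  fin_cases i <;> fin_cases j <;> simp_all [eq_comm]

section Reconfiguration

variable {V : Type*} {G : SimpleGraph V} {ℓ : ℕ}

def RecolorReach (G : SimpleGraph V) (ℓ m : ℕ) (k : V → ℕ) (f g : V → Fin ℓ) : Prop :=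
  ∃ c, IsRecolorSeq G ℓ m c ∧ c 0 = f ∧ c m = g ∧ ∀ a, recolorCount m c a ≤ k a

lemma recolorCount_eq_sum (m : ℕ) (c : ℕ → V → Fin ℓ) (a : V) :
    recolorCount m c a = ∑ i ∈ range m, if c i a ≠ c (i + 1) a then 1 else 0 :=
  card_filter _ _

lemma IsProperColoring.update [DecidableEq V] {f : V → Fin ℓ} (hf : IsProperColoring G ℓ f)
    {v : V} {x : Fin ℓ} (hx : ∀ w, G.Adj v w → x ≠ f w) :
    IsProperColoring G ℓ (update f v x) := by
  intro a b hab
  rcases eq_or_ne a v with rfl | ha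
  · rw [update_self, update_of_ne (G.ne_of_adj hab).symm]
    exact hx b hab
  rcases eq_or_ne b v with rfl | hb
  · rw [update_self, update_of_ne ha]
    exact (hx a hab.symm).symm
  rw [update_of_ne ha, update_of_ne hb]
  exact hf hab

lemma IsProperColoring.comp_injective {n : ℕ} {p : V → Fin n} (hp : IsProperColoring G n p)
    {col : Fin n → Fin ℓ} (hcol : Injective col) : IsProperColoring G ℓ (col ∘ p) :=
  fun _ _ hab => hcol.ne (hp hab)

namespace RecolorReach

variable {m m₁ m₂ : ℕ} {k k' k₁ k₂ : V → ℕ} {f g h : V → Fin ℓ}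

lemma isProperColoring_right (hfg : RecolorReach G ℓ m k f g) : IsProperColoring G ℓ g := by
  obtain ⟨c, hc, -, rfl, -⟩ := hfg
  exact hc.1 m le_rfl

lemma refl (hf : IsProperColoring G ℓ f) : RecolorReach G ℓ 0 0 f f :=
  ⟨fun _ => f, ⟨fun _ _ => hf, fun _ hi => absurd hi (Nat.not_lt_zero _)⟩, rfl, rfl,
    fun _ => by simp [recolorCount]⟩

lemma mono (hfg : RecolorReach G ℓ m k f g) (hk : k ≤ k') : RecolorReach G ℓ m k' f g := by
  obtain ⟨c, hc, hc0, hcm, hck⟩ := hfg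
  exact ⟨c, hc, hc0, hcm, fun a => (hck a).trans (hk a)⟩

lemma trans (h₁ : RecolorReach G ℓ m₁ k₁ f g) (h₂ : RecolorReach G ℓ m₂ k₂ g h) :
    RecolorReach G ℓ (m₁ + m₂) (k₁ + k₂) f h := by
  obtain ⟨c, hc, hc0, hcm, hck⟩ := h₁
  obtain ⟨d, hd, hd0, hdm, hdk⟩ := h₂
  set e : ℕ → V → Fin ℓ := fun i => if i ≤ m₁ then c i else d (i - m₁)
  have he_left : ∀ i ≤ m₁, e i = c i := fun i hi => if_pos hi
  have he_right : ∀ j, e (m₁ + j) = d j := by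
    rintro (_ | j)
    · simp [e, hcm, hd0]
    · simp [e]
  refine ⟨e, ⟨fun i hi => ?_, fun i hi a b hab => ?_⟩, by simp [e, hc0],
    by simp [he_right, hdm], fun a => ?_⟩
  · rcases le_or_gt i m₁ with hi₁ | hi₁
    · rw [he_left i hi₁]
      exact hc.1 i hi₁
    obtain ⟨j, rfl⟩ := Nat.exists_eq_add_of_le hi₁.le
    rw [he_right]
    exact hd.1 j (by omega)
  · rcases lt_or_ge i m₁ with hi₁ | hi₁
    · rw [he_left i hi₁.le, he_left (i + 1) hi₁]
      exact hc.2 i hi₁ a b hab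
    obtain ⟨j, rfl⟩ := Nat.exists_eq_add_of_le hi₁
    rw [he_right, show m₁ + j + 1 = m₁ + (j + 1) from rfl, he_right]
    exact hd.2 j (by omega) a b hab
  · rw [recolorCount_eq_sum, sum_range_add, Pi.add_apply]
    refine add_le_add (le_of_eq_of_le ?_ (hck a)) (le_of_eq_of_le ?_ (hdk a)) <;>
      rw [recolorCount_eq_sum] <;> refine sum_congr rfl fun i hi => ?_
    · rw [he_left i (by simp at hi; omega), he_left (i + 1) (by simp at hi; omega)]
    · rw [he_right, show m₁ + i + 1 = m₁ + (i + 1) from rfl, he_right]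

lemma symm (hfg : RecolorReach G ℓ m k f g) : RecolorReach G ℓ m k g f := by
  obtain ⟨c, hc, hc0, hcm, hck⟩ := hfg
  refine ⟨fun i => c (m - i), ⟨fun i _ => hc.1 _ (Nat.sub_le m i),
    fun i hi a b hab hch => ?_⟩, by simpa, by simpa, fun a => ?_⟩
  · have hi' : m - i = m - (i + 1) + 1 := by omega
    dsimp only at hch ⊢
    rw [hi'] at hch ⊢
    exact (hc.2 _ (by omega) a b hab (Ne.symm hch)).symm
  · refine le_of_eq_of_le ?_ (hck a)
    rw [recolorCount_eq_sum, recolorCount_eq_sum]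
    conv_rhs => rw [← sum_range_reflect]
    refine sum_congr rfl fun j hj => ?_
    have hj : j < m := mem_range.1 hj
    rw [show m - 1 - j = m - (j + 1) by omega, show m - (j + 1) + 1 = m - j by omega]
    exact if_congr ne_comm rfl rfl

lemma update [DecidableEq V] (hf : IsProperColoring G ℓ f) {v : V} {x : Fin ℓ}
    (hx : ∀ w, G.Adj v w → x ≠ f w) :
    RecolorReach G ℓ 1 (Pi.single v 1) f (Function.update f v x) := by
  refine ⟨fun i => if i = 0 then f else Function.update f v x, ⟨fun i hi => ?_, ?_⟩, rfl, rfl,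
    fun a => ?_⟩
  · interval_cases i
    exacts [hf, hf.update hx]
  · intro i hi a b hab hch
    obtain rfl : i = 0 := by omega
    simp only [if_pos, Nat.add_one_ne_zero, if_false] at hch ⊢
    have ha : a = v := by
      by_contra ha
      exact hch (update_of_ne ha ..).symm
    rw [update_of_ne (ha ▸ hab.symm)]
  · rw [recolorCount_eq_sum, sum_range_one]
    rcases eq_or_ne a v with rfl | ha
    · simp only [Pi.single_eq_same]
      split_ifs <;> omega
    · simp [update_of_ne ha]

lemma piecewise [DecidableEq V] (hf : IsProperColoring G ℓ f) {S : Finset V}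
    (hS : G.IsIndepSet S) (g : V → Fin ℓ) (hg : ∀ v ∈ S, ∀ w, G.Adj v w → g v ≠ f w) :
    RecolorReach G ℓ #S (fun a => if a ∈ S then 1 else 0) f (S.piecewise g f) := by
  induction S using Finset.induction_on with
  | empty => exact (refl hf).mono fun _ => by simp
  | @insert v T hv ih =>
    have hT := ih (hS.mono (by simp)) fun u hu => hg u (mem_insert_of_mem hu)
    have hstep : ∀ w, G.Adj v w → g v ≠ T.piecewise g f w := by
      intro w hvw
      have hw : w ∉ T := fun hw =>
        hS (by simp) (by simp [hw]) (G.ne_of_adj hvw) hvw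
      rw [piecewise_eq_of_notMem _ _ _ hw]
      exact hg v (mem_insert_self v T) w hvw
    rw [card_insert_of_notMem hv, piecewise_insert]
    refine (hT.trans (update hT.isProperColoring_right hstep)).mono fun a => ?_
    simp only [Pi.add_apply, Pi.single_apply, mem_insert]
    split_ifs <;> simp_all

end RecolorReach

end Reconfiguration

section ColorClasses

variable {V : Type*} [Fintype V] {G : SimpleGraph V} {ℓ n : ℕ} {p : V → Fin n}

lemma IsProperColoring.isIndepSet_fiber (hp : IsProperColoring G n p) (i : Fin n) :
    G.IsIndepSet (({v | p v = i} : Finset V) : Set V) := by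
  intro v hv w hw _ hvw
  simp only [coe_filter, mem_univ, true_and] at hv hw
  exact hp hvw (hv.trans hw.symm)

namespace RecolorReach

variable [DecidableEq V] {f : V → Fin ℓ}

lemma fiber (hp : IsProperColoring G n p) (hf : IsProperColoring G ℓ f) (i : Fin n)
    (g : V → Fin ℓ) (hg : ∀ v w, p v = i → G.Adj v w → g v ≠ f w) :
    RecolorReach G ℓ #{v | p v = i} (fun a => if p a = i then 1 else 0) f
      (fun v => if p v = i then g v else f v) := by
  convert piecewise hf (hp.isIndepSet_fiber i) g fun v hv w => hg v w (by simpa using hv)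
    using 1 <;> funext v <;> simp [Finset.piecewise]

lemma comp (hp : IsProperColoring G n p) {col col' : Fin n → Fin ℓ} (hcol : Injective col)
    (hcol' : Injective col') (i : Fin n) (hagree : ∀ j ≠ i, col' j = col j) :
    RecolorReach G ℓ #{v | p v = i} (fun a => if p a = i then 1 else 0)
      (col ∘ p) (col' ∘ p) := by
  have hnext := fiber hp (hp.comp_injective hcol) i (fun _ => col' i) fun v w hv hvw => by
    have hw : p w ≠ i := hv ▸ (hp hvw).symm
    simpa [← hagree (p w) hw] using hcol'.ne hw.symm
  convert hnext using 2 with v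
  by_cases hv : p v = i <;> simp [hv, hagree]

lemma exists_fiber_avoiding [DecidableRel G.Adj] (hp : IsProperColoring G n p)
    (hf : IsProperColoring G ℓ f) (i : Fin n) (x : Fin ℓ)
    (hdeg : ∀ v, p v = i → G.degree v + 1 < ℓ) :
    ∃ g : V → Fin ℓ, (∀ v, p v = i → g v ≠ x) ∧
      RecolorReach G ℓ #{v | p v = i} (fun a => if p a = i then 1 else 0) f
        (fun v => if p v = i then g v else f v) := by
  have hfree : ∀ v, ∃ q, p v = i → q ∉ insert x ((G.neighborFinset v).image f) := by
    intro v
    by_cases hv : p v = i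
    · obtain ⟨q, hq⟩ := exists_notMem_of_card_lt <| calc
        #(insert x ((G.neighborFinset v).image f)) ≤ #((G.neighborFinset v).image f) + 1 :=
          card_insert_le _ _
        _ ≤ G.degree v + 1 := by grw [card_image_le, card_neighborFinset_eq_degree]
        _ < ℓ := hdeg v hv
      exact ⟨q, fun _ => hq⟩
    · exact ⟨x, fun h => absurd h hv⟩
  choose g hg using hfree
  simp only [mem_insert, mem_image, mem_neighborFinset, not_or, not_exists, not_and] at hg
  exact ⟨g, fun v hv => (hg v hv).1,
    fiber hp hf i g fun v w hv hvw => Ne.symm ((hg v hv).2 w hvw)⟩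

end RecolorReach

end ColorClasses

section ThreeClasses

variable {V : Type*} [Fintype V] [DecidableEq V] {G : SimpleGraph V} {ℓ : ℕ} {p : V → Fin 3}

open RecolorReach

theorem exists_recolorReach_comp [DecidableRel G.Adj] (hp : IsProperColoring G 3 p)
    (h₁ : #{v | p v = 1} < ℓ) (h₂ : #{v | p v = 2} + 1 < ℓ)
    (hdeg : ∀ v, p v = 2 → G.degree v + 1 < ℓ) (h₃ : 2 < ℓ)
    {φ : V → Fin ℓ} (hφ : IsProperColoring G ℓ φ) :
    ∃ col : Fin 3 → Fin ℓ, Injective col ∧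
      RecolorReach G ℓ (#{v | p v = 2} + #{v | p v = 0} + #{v | p v = 1} + #{v | p v = 2})
        (fun _ => 2) φ (col ∘ p) := by
  obtain ⟨x, hx⟩ :=
    exists_notMem_of_card_lt ((card_image_le (s := {v | p v = 1}) (f := φ)).trans_lt h₁)
  obtain ⟨g, hgx, r₁⟩ := exists_fiber_avoiding hp hφ 2 x hdeg
  obtain ⟨y, hy⟩ := exists_notMem_of_card_lt <| calc
    #(insert x (image g {v | p v = 2})) ≤ #(image g {v | p v = 2}) + 1 := card_insert_le _ _
    _ ≤ #{v | p v = 2} + 1 := by grw [card_image_le]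
    _ < ℓ := h₂
  obtain ⟨z, hz⟩ := exists_notMem_of_card_lt (card_le_two (a := x) (b := y) |>.trans_lt h₃)
  simp only [mem_insert, mem_image, mem_filter, mem_univ, true_and, mem_singleton, not_or,
    not_exists, not_and] at hx hy hz
  have r₂ := fiber hp r₁.isProperColoring_right 0 (fun _ => x) fun v w hv hvw => by
    have hw : p w ≠ 0 := hv ▸ (hp hvw).symm
    by_cases hw₂ : p w = 2
    · simpa [hw₂] using (hgx w hw₂).symm
    · simpa [hw₂] using fun h => hx w (by omega) h.symm
  have r₃ := fiber hp r₂.isProperColoring_right 1 (fun _ => y) fun v w hv hvw => by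
    have hw : p w ≠ 1 := hv ▸ (hp hvw).symm
    by_cases hw₀ : p w = 0
    · simpa [hw₀] using hy.1
    · simpa [hw₀, show p w = 2 by omega] using fun h => hy.2 w (by omega) h.symm
  have r₄ := fiber hp r₃.isProperColoring_right 2 (fun _ => z) fun v w hv hvw => by
    have hw : p w ≠ 2 := hv ▸ (hp hvw).symm
    by_cases hw₀ : p w = 0
    · simpa [hw₀] using hz.1
    · simpa [hw₀, show p w = 1 by omega] using hz.2
  refine ⟨![x, y, z], injective_vecCons_three (Ne.symm hy.1) (Ne.symm hz.1) (Ne.symm hz.2), ?_⟩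
  convert (((r₁.trans r₂).trans r₃).trans r₄).mono fun v => ?_ using 1
  · funext v
    obtain h | h | h : p v = 0 ∨ p v = 1 ∨ p v = 2 := by omega
    all_goals simp [h]
  · simp only [Pi.add_apply]
    split_ifs <;> omega

theorem recolorReach_comp_of_injective (hp : IsProperColoring G 3 p) (hℓ : 5 ≤ ℓ)
    {col col' : Fin 3 → Fin ℓ} (hcol : Injective col) (hcol' : Injective col') :
    RecolorReach G ℓ (#{v | p v = 2} + #{v | p v = 0} + #{v | p v = 1} + #{v | p v = 0} +
      #{v | p v = 2}) (fun _ => 2) (col ∘ p) (col' ∘ p) := by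
  obtain ⟨t, ht⟩ := exists_notMem_of_card_lt <|
    (card_le_four (a := col 0) (b := col 1) (c := col' 0) (d := col' 1)).trans_lt hℓ
  obtain ⟨a, ha⟩ := exists_notMem_of_card_lt <|
    (card_le_three (a := col 1) (b := t) (c := col' 1)).trans_lt (by omega)
  simp only [mem_insert, mem_singleton, not_or] at ht ha
  have h₀₁ := hcol.ne (show (0 : Fin 3) ≠ 1 by decide)
  have h₀₁' := hcol'.ne (show (0 : Fin 3) ≠ 1 by decide)
  have hc₁ := injective_vecCons_three h₀₁ (Ne.symm ht.1) (Ne.symm ht.2.1)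
  have hc₂ := injective_vecCons_three ha.1 ha.2.1 (Ne.symm ht.2.1)
  have hc₃ := injective_vecCons_three ha.2.2 ha.2.1 (Ne.symm ht.2.2.2)
  have hc₄ := injective_vecCons_three h₀₁' (Ne.symm ht.2.2.1) (Ne.symm ht.2.2.2)
  have r₁ := comp hp hcol hc₁ 2 (by intro j hj; fin_cases j <;> simp_all)
  have r₂ := comp hp hc₁ hc₂ 0 (by intro j hj; fin_cases j <;> simp_all)
  have r₃ := comp hp hc₂ hc₃ 1 (by intro j hj; fin_cases j <;> simp_all)
  have r₄ := comp hp hc₃ hc₄ 0 (by intro j hj; fin_cases j <;> simp_all)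
  have r₅ := comp hp hc₄ hcol' 2 (by intro j hj; fin_cases j <;> simp_all)
  refine ((((r₁.trans r₂).trans r₃).trans r₄).trans r₅).mono fun v => ?_
  simp only [Pi.add_apply]
  split_ifs <;> omega

end ThreeClasses

instance : DecidableRel F2.Adj := fun a b =>
  inferInstanceAs (Decidable (a ≠ b ∧ ((a, b) ∈ f2edges ∨ (b, a) ∈ f2edges)))

lemma isProperColoring_f2class : IsProperColoring F2 3 f2class := by
  unfold IsProperColoring
  decide

lemma chromaticNumber_F2 : F2.chromaticNumber = 3 := by
  have hK : F2.IsClique (({0, 5, 6} : Finset (Fin 9)) : Set (Fin 9)) := by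
    rw [SimpleGraph.isClique_iff]
    decide
  exact le_antisymm (Colorable.chromaticNumber_le ⟨Coloring.mk f2class fun h =>
    isProperColoring_f2class h⟩) hK.card_le_chromaticNumber

lemma exists_recolorReach_F2 {ℓ : ℕ} (hℓ : 5 ≤ ℓ) {φ : Fin 9 → Fin ℓ}
    (hφ : IsProperColoring F2 ℓ φ) :
    ∃ col : Fin 3 → Fin ℓ, Injective col ∧
      RecolorReach F2 ℓ (#{v | f2class v = 2} + #{v | f2class v = 0} + #{v | f2class v = 1} +
        #{v | f2class v = 2}) (fun _ => 2) φ (col ∘ f2class) :=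
  exists_recolorReach_comp isProperColoring_f2class
    ((by decide : #{v | f2class v = 1} < 5).trans_le hℓ)
    ((by decide : #{v | f2class v = 2} + 1 < 5).trans_le hℓ)
    (fun v hv => ((by decide : ∀ v, f2class v = 2 → F2.degree v + 1 < 5) v hv).trans_le hℓ)
    (by omega) hφ

/-- `χ(F₂) = 3`, and for every `ℓ ≥ ρ(F₂) + 2 = 5`: from any `ℓ`-coloring
of `F₂` one can reach, recoloring each vertex at most twice, a 3-coloring with color
classes `{v₁,v₃,v₅}, {v₂,v₄,v₆}, {s₁,s₂,s₃}`; hence `F₂` is `ℓ`-mixing and `R_ℓ(F₂)` is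
connected with diameter at most `6·|V(F₂)| = 54`. -/
theorem stmt19 :
    F2.chromaticNumber = (3 : ℕ∞) ∧
    ∀ ℓ : ℕ, 5 ≤ ℓ →
      (∀ φ : Fin 9 → Fin ℓ, IsProperColoring F2 ℓ φ →
        ∃ m c, IsRecolorSeq F2 ℓ m c ∧ c 0 = φ ∧
          (∀ a b : Fin 9, c m a = c m b ↔ f2class a = f2class b) ∧
          ∀ a : Fin 9, recolorCount m c a ≤ 2) ∧
      (∀ φ ψ : Fin 9 → Fin ℓ, IsProperColoring F2 ℓ φ → IsProperColoring F2 ℓ ψ →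
        ∃ m c, IsRecolorSeq F2 ℓ m c ∧ c 0 = φ ∧ c m = ψ ∧ m ≤ 54) := by
  refine ⟨chromaticNumber_F2, fun ℓ hℓ => ⟨fun φ hφ => ?_, fun φ ψ hφ hψ => ?_⟩⟩
  · obtain ⟨col, hcol, c, hc, hc0, hcm, hck⟩ := exists_recolorReach_F2 hℓ hφ
    exact ⟨_, c, hc, hc0, fun a b => by rw [hcm]; exact hcol.eq_iff, hck⟩
  · obtain ⟨col, hcol, hφr⟩ := exists_recolorReach_F2 hℓ hφ
    obtain ⟨col', hcol', hψr⟩ := exists_recolorReach_F2 hℓ hψ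
    have hrename := recolorReach_comp_of_injective isProperColoring_f2class hℓ hcol hcol'
    obtain ⟨c, hc, hc0, hcm, -⟩ := (hφr.trans hrename).trans hψr.symm
    exact ⟨_, c, hc, hc0, hcm, by decide⟩
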